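/- arXiv:1703.01345 — 6 statements merged into one kernel-verified Lean document; each statement's English description precedes it below -/
import Mathlib

section
/- Let x > 1 be irrational with regular continued fraction expansion [a₀, a₁, a₂, ...]. If a₁ ≥ a₀ - 1 ≥ 1, then |x - (a₀ - 1)| < x/(a₀ - 1), i.e., the integer approximation x ≃ a₀ - 1 is intelligent. -/
/-- Partial quotients of the regular continued fraction of `x`:
`cfa x 0 = ⌊x⌋`, and `cfa x (n+1)` are the partial quotients of `1/(x - ⌊x⌋)`. -/
noncomputable def cfa (x : ℝ) : ℕ → ℤ
  | 0 => ⌊x⌋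
  | n + 1 => cfa (x - ⌊x⌋)⁻¹ n

/-- The value of a finite regular continued fraction `[a₀, a₁, …, aₖ]`. -/
noncomputable def cfVal : List ℝ → ℝ
  | [] => 0
  | a :: l => if l = [] then a else a + (cfVal l)⁻¹

/-- The `n`-th regular continued fraction convergent of `x`, i.e. the value of
`[a₀, a₁, …, aₙ]` where the `aᵢ` are the partial quotients of `x`. -/
noncomputable def cfConv (x : ℝ) (n : ℕ) : ℝ :=
  cfVal ((List.range (n + 1)).map fun i => ((cfa x i : ℤ) : ℝ))

/-! With `f = x - ⌊x⌋`, the hypothesis `a₁ ≥ a₀ - 1 ≥ 1` says `1 ≤ a₀ - 1 ≤ ⌊1/f⌋`, so `f > 0` and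
`f (a₀ - 1) ≤ 1`. The claim `f + 1 < (a₀ + f)/(a₀ - 1)` is equivalent to `f (a₀ - 2) < 1`, which then
holds because `f (a₀ - 2) < f (a₀ - 1) ≤ 1`. -/

lemma cfa_zero (x : ℝ) : cfa x 0 = ⌊x⌋ := rfl

lemma cfa_one (x : ℝ) : cfa x 1 = ⌊(Int.fract x)⁻¹⌋ := rfl

lemma pos_and_mul_le_one_of_le_inv {f c : ℝ} (hc : 0 < c) (h : c ≤ f⁻¹) : 0 < f ∧ f * c ≤ 1 := by
  have hf : 0 < f := inv_pos.mp (hc.trans_le h)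
  exact ⟨hf, by simpa [hf.ne'] using mul_le_mul_of_nonneg_left h hf.le⟩

lemma add_one_lt_add_div_sub_one {a f : ℝ} (ha : 2 ≤ a) (hf : 0 < f) (hfa : f * (a - 1) ≤ 1) :
    f + 1 < (a + f) / (a - 1) := by
  rw [lt_div_iff₀ (by linarith)]
  nlinarith

theorem stmt_7_general (x : ℝ)
    (h1 : cfa x 1 ≥ cfa x 0 - 1) (h2 : cfa x 0 - 1 ≥ 1) :
    |x - ((cfa x 0 - 1 : ℤ) : ℝ)| < x / ((cfa x 0 : ℝ) - 1) := by
  rw [cfa_zero] at h1 h2 ⊢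
  rw [cfa_one] at h1
  have ha : (2 : ℝ) ≤ ⌊x⌋ := by exact_mod_cast (by omega : (2 : ℤ) ≤ ⌊x⌋)
  have hle : (⌊x⌋ : ℝ) - 1 ≤ (Int.fract x)⁻¹ := by exact_mod_cast Int.le_floor.mp h1
  obtain ⟨hf, hfa⟩ := pos_and_mul_le_one_of_le_inv (by linarith) hle
  have hdist : x - ((⌊x⌋ - 1 : ℤ) : ℝ) = Int.fract x + 1 := by
    rw [Int.fract]; push_cast; ring
  rw [hdist, abs_of_pos (by linarith)]
  simpa only [Int.floor_add_fract] using add_one_lt_add_div_sub_one ha hf hfa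

theorem stmt_7 (x : ℝ) (hx : Irrational x) (hx1 : 1 < x)
    (h1 : cfa x 1 ≥ cfa x 0 - 1) (h2 : cfa x 0 - 1 ≥ 1) :
    |x - ((cfa x 0 - 1 : ℤ) : ℝ)| < x / ((cfa x 0 : ℝ) - 1) :=
  stmt_7_general x h1 h2
end

section
/- Let x > 1 be irrational with regular continued fraction expansion [a₀, a₁, a₂, ...]. If 2 ≤ a₁ ≤ a₀ + 1, then |x - (a₀ + 1)| ≤ x/(a₀ + 1), i.e., the integer approximation x ≃ a₀ + 1 is intelligent. -/
theorem stmt_8 (x : ℝ) (hx : Irrational x) (hx1 : 1 < x)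
    (h1 : 2 ≤ cfa x 1) (h2 : cfa x 1 ≤ cfa x 0 + 1) :
    |x - ((cfa x 0 + 1 : ℤ) : ℝ)| ≤ x / ((cfa x 0 : ℝ) + 1) := by
  have ha0 : (1 : ℤ) ≤ ⌊x⌋ := Int.le_floor.mpr (by exact_mod_cast hx1.le)
  set f : ℝ := x - ⌊x⌋ with hf
  have hf0 : 0 < f := by
    have : x ≠ (⌊x⌋ : ℝ) := fun h => hx ⟨⌊x⌋, h.symm⟩
    have := Int.floor_le x
    rcases lt_or_eq_of_le this with h | h
    · linarith
    · exact absurd h.symm ‹x ≠ (⌊x⌋ : ℝ)›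
  have hc1 : cfa x 1 = ⌊f⁻¹⌋ := rfl
  have hc0 : cfa x 0 = ⌊x⌋ := rfl
  rw [hc1] at h1 h2
  rw [hc0] at h2 ⊢
  -- from h1 : 2 ≤ ⌊f⁻¹⌋, get f⁻¹ ≥ 2
  have h1' : (2 : ℝ) ≤ f⁻¹ := by
    have := Int.floor_le f⁻¹
    have : ((2 : ℤ) : ℝ) ≤ f⁻¹ := le_trans (by exact_mod_cast h1) this
    exact_mod_cast this
  have hfhalf : f ≤ 1/2 := by
    rw [le_div_iff₀ (by norm_num)]
    calc f * 2 ≤ f * f⁻¹ := by nlinarith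
    _ = 1 := mul_inv_cancel₀ hf0.ne'
  -- from h2 : ⌊f⁻¹⌋ ≤ ⌊x⌋ + 1, get f⁻¹ < ⌊x⌋ + 2
  have h2' : f⁻¹ < (⌊x⌋ : ℝ) + 2 := by
    have := Int.lt_floor_add_one f⁻¹
    have h2r : ((⌊f⁻¹⌋ : ℤ) : ℝ) ≤ (⌊x⌋ : ℝ) + 1 := by exact_mod_cast h2
    linarith
  have ha0r : (1 : ℝ) ≤ (⌊x⌋ : ℝ) := by exact_mod_cast ha0
  have hkey : 1 < f * ((⌊x⌋ : ℝ) + 2) := by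
    have := mul_lt_mul_of_pos_left h2' hf0
    rw [mul_inv_cancel₀ hf0.ne'] at this
    exact this
  have hxf : x = f + ⌊x⌋ := by rw [hf]; ring
  have habs : |x - ((⌊x⌋ + 1 : ℤ) : ℝ)| = 1 - f := by
    rw [abs_of_nonpos (by push_cast; linarith)]
    push_cast
    linarith
  rw [habs, le_div_iff₀ (by linarith)]
  nlinarith
end

section
/- Let x > 1 be an irrational number with regular continued fraction expansion [a₀, a₁, a₂, ...] (all aᵢ positive integers), and suppose that for some n ≥ 1 we have a_{n+1} ≥ aₙ - 1 ≥ 1. Let p'/q' (in lowest terms, p', q' > 0) be the value of the finite continued fraction [a₀, a₁, ..., a_{n-1}, aₙ - 1]. Then |x - p'/q'| ≤ x/(p' q'). -/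
/-!
Write `x = [a₀, …, aₙ₋₁, y]` with `y` the `n`-th complete quotient. With the unimodular matrix
`M = ∏ᵢ<ₙ !![aᵢ, 1; 1, 0]`, both `x` and `p'/q'` are Möbius images: `x = M·y` and `p'/q' = M·c`
for `c = aₙ - 1`, and `y = c + 1 + 1/s` where `s ≥ aₙ₊₁ ≥ c` is the next complete quotient.
Since `det M = ±1`, the pair `(p', q')` is the column `M (c, 1)ᵀ` and
`|M·y - M·c| = (y - c) / (den y · den c)`; the claim then reduces to
`(1 + 1/s)(P c + P') ≤ P (c + 1 + 1/s) + P'` for the first row `(P, P')` of `M`,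
i.e. to `P c + P' ≤ P (s + 1)`, which holds because `P' ≤ P` and `c ≤ s`.
-/

/-- The complete quotients `xₙ`, so that `x = [a₀, …, aₙ₋₁, xₙ]`. -/
noncomputable def cfTail (x : ℝ) : ℕ → ℝ
  | 0 => x
  | n + 1 => cfTail (x - ⌊x⌋)⁻¹ n

theorem cfa_eq_floor_cfTail (x : ℝ) (n : ℕ) : cfa x n = ⌊cfTail x n⌋ := by
  induction n generalizing x with
  | zero => rfl
  | succ n ih => exact ih _

theorem cfTail_succ (x : ℝ) (n : ℕ) : cfTail x (n + 1) = (Int.fract (cfTail x n))⁻¹ := by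
  induction n generalizing x with
  | zero => rfl
  | succ n ih => exact ih _

theorem cfTail_eq_cfa_add_inv (x : ℝ) (n : ℕ) :
    cfTail x n = cfa x n + (cfTail x (n + 1))⁻¹ := by
  rw [cfTail_succ, inv_inv, cfa_eq_floor_cfTail, Int.fract]
  ring

section CompleteQuotients

variable {x : ℝ}

theorem Irrational.fract_ne_zero (hx : Irrational x) : Int.fract x ≠ 0 :=
  Int.fract_ne_zero_iff.2 fun ⟨m, hm⟩ => hx.ne_int m hm.symm

theorem Irrational.one_lt_inv_fract (hx : Irrational x) : 1 < (Int.fract x)⁻¹ :=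
  (one_lt_inv₀ ((Int.fract_nonneg x).lt_of_ne' hx.fract_ne_zero)).2 (Int.fract_lt_one x)

theorem irrational_cfTail (hx : Irrational x) (n : ℕ) : Irrational (cfTail x n) := by
  induction n with
  | zero => exact hx
  | succ n ih => rw [cfTail_succ, ← Int.self_sub_floor]; exact (ih.sub_intCast _).inv

theorem one_lt_cfTail (hx : Irrational x) (hx1 : 1 < x) : ∀ n, 1 < cfTail x n
  | 0 => hx1
  | n + 1 => by rw [cfTail_succ]; exact (irrational_cfTail hx n).one_lt_inv_fract

theorem one_le_cfa (hx : Irrational x) (hx1 : 1 < x) (n : ℕ) : 1 ≤ cfa x n := by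
  rw [cfa_eq_floor_cfTail, Int.le_floor, Int.cast_one]
  exact (one_lt_cfTail hx hx1 n).le

end CompleteQuotients

theorem cfVal_append_pair (L : List ℝ) (a t : ℝ) :
    cfVal (L ++ [a, t]) = cfVal (L ++ [a + t⁻¹]) := by
  induction L with
  | nil => simp [cfVal]
  | cons b L ih => simp [cfVal, ih]

theorem cfVal_cfa_append_cfTail (x : ℝ) (k : ℕ) :
    cfVal ((List.range k).map (fun i => (cfa x i : ℝ)) ++ [cfTail x k]) = x := by
  induction k with
  | zero => simp [cfVal, cfTail]
  | succ k ih =>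
    rw [List.range_succ, List.map_append, List.map_singleton, List.append_assoc,
      List.singleton_append, cfVal_append_pair, ← cfTail_eq_cfa_add_inv, ih]

/-- `∏ !![aᵢ, 1; 1, 0]`: its columns are the numerators and denominators of the last two
convergents of `[a₀, …, aₖ₋₁]`, the identity playing the role of `p₋₁/q₋₁ = 1/0, p₋₂/q₋₂ = 0/1`. -/
def cfMatrix (L : List ℤ) : Matrix (Fin 2) (Fin 2) ℤ :=
  (L.map fun a => !![a, 1; 1, 0]).prod

noncomputable def mobius (M : Matrix (Fin 2) (Fin 2) ℤ) (u : ℝ) : ℝ :=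
  (M 0 0 * u + M 0 1) / (M 1 0 * u + M 1 1)

theorem mobius_mul_eq_mobius_add_inv (M : Matrix (Fin 2) (Fin 2) ℤ) (a : ℤ) {t : ℝ} (ht : t ≠ 0) :
    mobius (M * !![a, 1; 1, 0]) t = mobius M (a + t⁻¹) := by
  simp only [mobius, Matrix.mul_apply, Matrix.of_apply, Matrix.cons_val', Matrix.cons_val_zero,
    Matrix.cons_val_one, Matrix.cons_val_fin_one, Fin.sum_univ_two, mul_one, mul_zero, add_zero]
  push_cast
  rw [← div_div_div_cancel_right₀ ht]
  congr 1 <;> field_simp <;> ring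

section CfMatrix

variable {L : List ℤ}

theorem cfMatrix_append_singleton (L : List ℤ) (a : ℤ) :
    cfMatrix (L ++ [a]) = cfMatrix L * !![a, 1; 1, 0] := by
  simp [cfMatrix]

theorem cfMatrix_append_singleton_apply_zero (L : List ℤ) (a : ℤ) (i : Fin 2) :
    cfMatrix (L ++ [a]) i 0 = a * cfMatrix L i 0 + cfMatrix L i 1 := by
  simp [cfMatrix_append_singleton, Matrix.mul_apply, Fin.sum_univ_two, mul_comm]

theorem cfMatrix_append_singleton_apply_one (L : List ℤ) (a : ℤ) (i : Fin 2) :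
    cfMatrix (L ++ [a]) i 1 = cfMatrix L i 0 := by
  simp [cfMatrix_append_singleton, Matrix.mul_apply, Fin.sum_univ_two]

theorem det_cfMatrix (L : List ℤ) : (cfMatrix L).det = (-1) ^ L.length := by
  induction L using List.reverseRecOn with
  | nil => simp [cfMatrix]
  | append_singleton L a ih =>
    rw [cfMatrix_append_singleton, Matrix.det_mul, ih, Matrix.det_fin_two_of]
    simp [pow_succ]

theorem cfMatrix_nonneg (hL : ∀ a ∈ L, 0 ≤ a) (i j : Fin 2) : 0 ≤ cfMatrix L i j := by
  induction L using List.reverseRecOn generalizing i j with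
  | nil => fin_cases i <;> fin_cases j <;> simp [cfMatrix]
  | append_singleton L a ih =>
    have ih' := ih fun b hb => hL b (by simp [hb])
    have ha : 0 ≤ a := hL a (by simp)
    match j with
    | 0 =>
      rw [cfMatrix_append_singleton_apply_zero]
      exact add_nonneg (mul_nonneg ha (ih' i 0)) (ih' i 1)
    | 1 => exact (cfMatrix_append_singleton_apply_one L a i).symm ▸ ih' i 0

theorem cfMatrix_zero_one_le (hL : ∀ a ∈ L, 1 ≤ a) : cfMatrix L 0 1 ≤ cfMatrix L 0 0 := by
  induction L using List.reverseRecOn with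
  | nil => simp [cfMatrix]
  | append_singleton L a _ =>
    have hL' : ∀ b ∈ L, 0 ≤ b := fun b hb => zero_le_one.trans (hL b (by simp [hb]))
    have ha : 1 ≤ a := hL a (by simp)
    rw [cfMatrix_append_singleton_apply_zero, cfMatrix_append_singleton_apply_one]
    nlinarith [cfMatrix_nonneg hL' 0 0, cfMatrix_nonneg hL' 0 1]

theorem cfVal_append_singleton (hL : ∀ a ∈ L, 0 ≤ a) {t : ℝ} (ht : 0 < t) :
    cfVal (L.map (↑) ++ [t]) = mobius (cfMatrix L) t := by
  induction L using List.reverseRecOn generalizing t with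
  | nil => simp [cfVal, mobius, cfMatrix]
  | append_singleton L a ih =>
    have ha : (0 : ℝ) ≤ a := by exact_mod_cast hL a (by simp)
    rw [List.map_append, List.map_singleton, List.append_assoc, List.singleton_append,
      cfVal_append_pair, ih (fun b hb => hL b (by simp [hb])) (by positivity),
      cfMatrix_append_singleton, mobius_mul_eq_mobius_add_inv _ _ ht.ne']

end CfMatrix

section Mobius

variable {M : Matrix (Fin 2) (Fin 2) ℤ}

theorem mobius_sub_mobius (M : Matrix (Fin 2) (Fin 2) ℤ) {u v : ℝ}
    (hu : (M 1 0 : ℝ) * u + M 1 1 ≠ 0) (hv : (M 1 0 : ℝ) * v + M 1 1 ≠ 0) :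
    mobius M u - mobius M v =
      M.det * (u - v) / ((M 1 0 * u + M 1 1) * (M 1 0 * v + M 1 1)) := by
  rw [mobius, mobius, div_sub_div _ _ hu hv, Matrix.det_fin_two]
  push_cast
  ring

theorem mul_add_pos_of_nonneg_of_det_ne_zero (hM : ∀ i j, 0 ≤ M i j) (hdet : M.det ≠ 0)
    (i : Fin 2) {u : ℝ} (hu : 0 < u) : 0 < (M i 0 : ℝ) * u + M i 1 := by
  have h0 : (0 : ℝ) ≤ M i 0 := by exact_mod_cast hM i 0
  have h1 : (0 : ℝ) ≤ M i 1 := by exact_mod_cast hM i 1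
  rcases h0.lt_or_eq with h0 | h0
  · exact add_pos_of_pos_of_nonneg (mul_pos h0 hu) h1
  rcases h1.lt_or_eq with h1 | h1
  · rw [← h0, zero_mul, zero_add]; exact h1
  have hrow : M i 0 = 0 ∧ M i 1 = 0 := ⟨by exact_mod_cast h0.symm, by exact_mod_cast h1.symm⟩
  refine absurd ?_ hdet
  rw [Matrix.det_fin_two]
  match i, hrow with
  | 0, ⟨h0, h1⟩ => rw [h0, h1]; ring
  | 1, ⟨h0, h1⟩ => rw [h0, h1]; ring

theorem isCoprime_mul_add (hdet : |M.det| = 1) (c : ℤ) :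
    IsCoprime (M 0 0 * c + M 0 1) (M 1 0 * c + M 1 1) := by
  have h : M.det * M.det = 1 := by rw [← abs_mul_abs_self, hdet, one_mul]
  exact ⟨-(M 1 0 * M.det), M 0 0 * M.det, by linear_combination h - M.det * M.det_fin_two⟩

theorem abs_mobius_sub_mobius_le (hM : ∀ i j, 0 ≤ M i j) (hdet : |M.det| = 1)
    (hM0 : M 0 1 ≤ M 0 0) {c s : ℝ} (hc : 0 < c) (hs : 0 < s) (hcs : c ≤ s) :
    |mobius M (c + 1 + s⁻¹) - mobius M c| ≤
      mobius M (c + 1 + s⁻¹) / ((M 0 0 * c + M 0 1) * (M 1 0 * c + M 1 1)) := by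
  have hdet0 : M.det ≠ 0 := by rintro h; simp [h] at hdet
  set y := c + 1 + s⁻¹ with hy_def
  have hyc : y - c = 1 + s⁻¹ := by ring
  have hA := mul_add_pos_of_nonneg_of_det_ne_zero hM hdet0 0 hc
  have hB := mul_add_pos_of_nonneg_of_det_ne_zero hM hdet0 1 hc
  have hD := mul_add_pos_of_nonneg_of_det_ne_zero hM hdet0 1 (by positivity : 0 < y)
  have hP : (0 : ℝ) ≤ M 0 0 := by exact_mod_cast hM 0 0
  have hP' : (M 0 1 : ℝ) ≤ M 0 0 := by exact_mod_cast hM0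
  have key : (y - c) * (M 0 0 * c + M 0 1) ≤ M 0 0 * y + M 0 1 := by
    have h : s⁻¹ * (M 0 0 * c + M 0 1 - M 0 0 * (s + 1)) ≤ 0 :=
      mul_nonpos_of_nonneg_of_nonpos (inv_nonneg.2 hs.le) (by nlinarith)
    have : (y - c) * (M 0 0 * c + M 0 1) - (M 0 0 * y + M 0 1) =
        s⁻¹ * (M 0 0 * c + M 0 1 - M 0 0 * (s + 1)) := by
      rw [hyc, hy_def]
      field_simp
      ring
    linarith
  rw [mobius_sub_mobius M hD.ne' hB.ne', abs_div, abs_mul, ← Int.cast_abs, hdet,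
    abs_of_pos (mul_pos hD hB), abs_of_pos (by linarith [hyc, inv_pos.2 hs]), mobius,
    div_div, div_le_div_iff₀ (mul_pos hD hB) (mul_pos hD (mul_pos hA hB))]
  push_cast
  nlinarith [mul_le_mul_of_nonneg_right key (mul_pos hD hB).le]

theorem eq_mul_add_of_div_eq_mobius (hM : ∀ i j, 0 ≤ M i j) (hdet : |M.det| = 1) {c p q : ℤ}
    (hc : 0 < c) (hq : 0 < q) (hpq : Int.gcd p q = 1) (h : (p : ℝ) / q = mobius M c) :
    p = M 0 0 * c + M 0 1 ∧ q = M 1 0 * c + M 1 1 := by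
  have hdet0 : M.det ≠ 0 := by rintro h; simp [h] at hdet
  have hB : 0 < M 1 0 * c + M 1 1 := by
    exact_mod_cast mul_add_pos_of_nonneg_of_det_ne_zero hM hdet0 1 (Int.cast_pos.2 hc)
  rw [mobius] at h
  exact Rat.div_int_inj hq hB hpq (Int.isCoprime_iff_gcd_eq_one.mp (isCoprime_mul_add hdet c))
    (by exact_mod_cast h)

end Mobius

theorem cfVal_cfa_prefix_append {x : ℝ} (hx : Irrational x) (hx1 : 1 < x) (n : ℕ) {t : ℝ}
    (ht : 0 < t) :
    cfVal (((List.range n).map fun i => (cfa x i : ℝ)) ++ [t]) =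
      mobius (cfMatrix ((List.range n).map (cfa x))) t := by
  rw [show (List.range n).map (fun i => (cfa x i : ℝ)) = ((List.range n).map (cfa x)).map (↑) by
    simp]
  exact cfVal_append_singleton (by simp [(one_le_cfa hx hx1 _).trans' zero_le_one]) ht

theorem mobius_cfMatrix_cfTail {x : ℝ} (hx : Irrational x) (hx1 : 1 < x) (n : ℕ) :
    mobius (cfMatrix ((List.range n).map (cfa x))) (cfTail x n) = x := by
  rw [← cfVal_cfa_prefix_append hx hx1 n (one_pos.trans (one_lt_cfTail hx hx1 n)),
    cfVal_cfa_append_cfTail]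

theorem stmt_9_general (x : ℝ) (hx : Irrational x) (hx1 : 1 < x) (n : ℕ)
    (h1 : cfa x (n + 1) ≥ cfa x n - 1) (h2 : cfa x n - 1 ≥ 1)
    (p' q' : ℤ) (hq' : 0 < q') (hcop : Int.gcd p' q' = 1)
    (hval : (p' : ℝ) / q' =
      cfVal (((List.range n).map fun i => ((cfa x i : ℤ) : ℝ)) ++ [((cfa x n - 1 : ℤ) : ℝ)])) :
    |x - (p' : ℝ) / q'| ≤ x / ((p' : ℝ) * q') := by
  set M := cfMatrix ((List.range n).map (cfa x))
  set c := cfa x n - 1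
  set s := cfTail x (n + 1)
  have hL : ∀ a ∈ (List.range n).map (cfa x), 1 ≤ a := by simp [one_le_cfa hx hx1]
  have hM : ∀ i j, 0 ≤ M i j := cfMatrix_nonneg fun a ha => zero_le_one.trans (hL a ha)
  have hdet : |M.det| = 1 := by simp [M, det_cfMatrix]
  have hc : 0 < c := zero_lt_one.trans_le h2
  have hc' : (0 : ℝ) < c := Int.cast_pos.2 hc
  have hcs : (c : ℝ) ≤ s := by
    rw [← Int.le_floor, ← cfa_eq_floor_cfTail]
    exact h1
  have hx_eq : x = mobius M (c + 1 + s⁻¹) := by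
    rw [← mobius_cfMatrix_cfTail hx hx1 n, cfTail_eq_cfa_add_inv]
    congr 1
    push_cast [c]
    ring
  obtain ⟨rfl, rfl⟩ := eq_mul_add_of_div_eq_mobius hM hdet hc hq' hcop
    (hval.trans (cfVal_cfa_prefix_append hx hx1 n hc'))
  rw [hx_eq]
  push_cast
  exact abs_mobius_sub_mobius_le hM hdet (cfMatrix_zero_one_le hL) hc'
    (one_pos.trans (one_lt_cfTail hx hx1 _)) hcs

theorem stmt_9 (x : ℝ) (hx : Irrational x) (hx1 : 1 < x) (n : ℕ) (hn : 1 ≤ n)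
    (h1 : cfa x (n + 1) ≥ cfa x n - 1) (h2 : cfa x n - 1 ≥ 1)
    (p' q' : ℤ) (hp' : 0 < p') (hq' : 0 < q') (hcop : Int.gcd p' q' = 1)
    (hval : (p' : ℝ) / q' =
      cfVal (((List.range n).map fun i => ((cfa x i : ℤ) : ℝ)) ++ [((cfa x n - 1 : ℤ) : ℝ)])) :
    |x - (p' : ℝ) / q'| ≤ x / ((p' : ℝ) * q') :=
  stmt_9_general x hx hx1 n h1 h2 p' q' hq' hcop hval
end

section
/- Let x be an irrational number that is not a Liouville number. Then there exists a constant C > 0 such that for all nonzero integers a, b with |ab| ≠ 1, (log|x| - log|x - a/b|)/log|ab| ≤ C. -/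
/-!
A non-Liouville number `x` admits an exponent `n` with `|x - a/b| ≥ b⁻ⁿ` for every rational
`a/b ≠ x` with denominator `b > 1`; in logarithms, `-log |x - a/b| ≤ n log b`. Writing an arbitrary
`a/b` with the denominator `2|b| > 1`, and using `2|b| ≤ |ab|²`, this becomes `≤ 2n log |ab|`, while
`log |x| ≤ |log |x|| / log 2 · log |ab|` since `|ab| ≥ 2`. Dividing by `log |ab|` bounds the measure
of intelligence by `|log |x|| / log 2 + 2n`.
-/

open Real

namespace Liouville

lemma exists_neg_mul_log_le_log_abs_sub {x : ℝ} (hL : ¬ Liouville x) :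
    ∃ n : ℕ, ∀ a b : ℤ, 1 < b → -(n * log b) ≤ log |x - a / b| := by
  simp only [Liouville, not_forall, not_exists, not_and, not_lt] at hL
  obtain ⟨n, hn⟩ := hL
  refine ⟨n, fun a b hb => ?_⟩
  by_cases hx : x = a / b
  · have : 0 ≤ log (b : ℝ) := log_nonneg (by exact_mod_cast hb.le)
    simp only [hx, sub_self, abs_zero, log_zero]
    exact neg_nonpos.mpr (mul_nonneg n.cast_nonneg this)
  · have hb₀ : (0 : ℝ) < b := by exact_mod_cast zero_lt_one.trans hb
    calc -(n * log b) = log (1 / (b : ℝ) ^ n) := by rw [one_div, log_inv, log_pow]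
      _ ≤ log |x - a / b| := log_le_log (by positivity) (hn a b hb hx)

lemma exists_neg_mul_log_two_mul_abs_le_log_abs_sub {x : ℝ} (hL : ¬ Liouville x) :
    ∃ n : ℕ, ∀ a b : ℤ, b ≠ 0 → -(n * log (2 * |(b : ℝ)|)) ≤ log |x - a / b| := by
  obtain ⟨n, hn⟩ := exists_neg_mul_log_le_log_abs_sub hL
  refine ⟨n, fun a b hb => ?_⟩
  rcases hb.lt_or_gt with hb | hb
  · convert hn (-2 * a) (-2 * b) (by omega) using 3
    · push_cast; rw [abs_of_neg (by exact_mod_cast hb), mul_neg, neg_mul]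
    · push_cast; field_simp
  · convert hn (2 * a) (2 * b) (by omega) using 3
    · push_cast; rw [abs_of_pos (by exact_mod_cast hb)]
    · push_cast; field_simp

end Liouville

lemma two_le_abs_intCast_mul {a b : ℤ} (ha : a ≠ 0) (hb : b ≠ 0) (hab : |a * b| ≠ 1) :
    (2 : ℝ) ≤ |(a : ℝ) * b| := by
  have : 2 ≤ |a * b| := (Int.one_le_abs (mul_ne_zero ha hb)).lt_of_ne' hab
  exact_mod_cast this

lemma two_mul_abs_intCast_le_sq_abs_mul {a b : ℤ} (ha : a ≠ 0) (hab : (2 : ℝ) ≤ |(a : ℝ) * b|) :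
    2 * |(b : ℝ)| ≤ |(a : ℝ) * b| ^ 2 := by
  have ha₁ : (1 : ℝ) ≤ |(a : ℝ)| := by exact_mod_cast Int.one_le_abs ha
  rw [abs_mul] at hab ⊢
  nlinarith [abs_nonneg (b : ℝ)]

theorem stmt_13_general (x : ℝ) (hL : ¬ Liouville x) :
    ∃ C : ℝ, 0 < C ∧ ∀ a b : ℤ, a ≠ 0 → b ≠ 0 → |a * b| ≠ 1 →
      (Real.log |x| - Real.log |x - (a : ℝ) / b|) / Real.log |(a : ℝ) * b| ≤ C := by
  obtain ⟨n, hn⟩ := Liouville.exists_neg_mul_log_two_mul_abs_le_log_abs_sub hL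
  have hlog2 : 0 < log 2 := log_pos one_lt_two
  refine ⟨|log (|x|)| / log 2 + 2 * n + 1, by positivity, fun a b ha hb hab => ?_⟩
  have h2 := two_le_abs_intCast_mul ha hb hab
  have hL2 : log 2 ≤ log |(a : ℝ) * b| := log_le_log two_pos h2
  have hden : log (2 * |(b : ℝ)|) ≤ 2 * log |(a : ℝ) * b| := by
    calc log (2 * |(b : ℝ)|) ≤ log (|(a : ℝ) * b| ^ 2) :=
          log_le_log (by positivity) (two_mul_abs_intCast_le_sq_abs_mul ha h2)
      _ = 2 * log |(a : ℝ) * b| := by rw [log_pow]; norm_num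
  have hnum : log |x| ≤ |log (|x|)| / log 2 * log |(a : ℝ) * b| := by
    calc log |x| ≤ |log (|x|)| / log 2 * log 2 := by
          rw [div_mul_cancel₀ _ hlog2.ne']; exact le_abs_self _
      _ ≤ _ := by gcongr
  rw [div_le_iff₀ (hlog2.trans_le hL2)]
  linarith [hn a b hb, mul_le_mul_of_nonneg_left hden n.cast_nonneg]

theorem stmt_13 (x : ℝ) (hx : Irrational x) (hL : ¬ Liouville x) :
    ∃ C : ℝ, 0 < C ∧ ∀ a b : ℤ, a ≠ 0 → b ≠ 0 → |a * b| ≠ 1 →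
      (Real.log |x| - Real.log |x - (a : ℝ) / b|) / Real.log |(a : ℝ) * b| ≤ C :=
  stmt_13_general x hL
end

section
/- Let x be an irrational number. The set of measures of intelligence (log|x| - log|x - a/b|)/log|ab| over all admissible rational approximations a/b of x (a, b nonzero integers, |ab| ≠ 1) is unbounded above if and only if x is a Liouville number. -/
theorem stmt_14 (x : ℝ) (hx : Irrational x) :
    ¬ BddAbove {μ : ℝ | ∃ a b : ℤ, a ≠ 0 ∧ b ≠ 0 ∧ |a * b| ≠ 1 ∧
      μ = (Real.log |x| - Real.log |x - (a : ℝ) / b|) / Real.log |(a : ℝ) * b|} ↔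
    Liouville x := by
  have hx0 : x ≠ 0 := by simpa using hx.ne_int 0
  have habs : (0:ℝ) < |x| := abs_pos.mpr hx0
  have hlog2 : (0:ℝ) < Real.log 2 := Real.log_pos (by norm_num)
  set L := Real.log |x| with hLdef
  have hxne : ∀ a b : ℤ, x ≠ (a:ℝ)/b := by
    intro a b hc
    exact hx ⟨(a:ℚ)/b, by push_cast; exact hc.symm⟩
  constructor
  · intro h n
    obtain ⟨μ, hμS, hμM⟩ := not_bddAbove_iff.mp h ((n:ℝ) + |L| / Real.log 2)
    obtain ⟨a, b, ha, hb, hab, hμ⟩ := hμS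
    have hab0 : a * b ≠ 0 := mul_ne_zero ha hb
    have hab2 : (2:ℤ) ≤ |a * b| := by
      have h1 : (1:ℤ) ≤ |a * b| := Int.one_le_abs hab0
      rcases lt_or_eq_of_le h1 with h2 | h2
      · omega
      · exact absurd h2.symm hab
    have hbR : (b:ℝ) ≠ 0 := Int.cast_ne_zero.mpr hb
    have haR : (a:ℝ) ≠ 0 := Int.cast_ne_zero.mpr ha
    have habR : (2:ℝ) ≤ |(a:ℝ) * (b:ℝ)| := by
      have : ((2:ℤ):ℝ) ≤ ((|a*b|:ℤ):ℝ) := by exact_mod_cast hab2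
      rw [Int.cast_abs, Int.cast_mul] at this
      norm_num at this ⊢
      exact this
    have hG : (0:ℝ) < Real.log |(a:ℝ) * b| := Real.log_pos (by linarith)
    have hG2 : Real.log 2 ≤ Real.log |(a:ℝ) * b| :=
      Real.log_le_log (by norm_num) habR
    have hD0 : (0:ℝ) < |x - (a:ℝ)/b| := abs_pos.mpr (sub_ne_zero.mpr (hxne a b))
    rw [eq_div_iff hG.ne'] at hμ
    have hkey : Real.log |x - (a:ℝ)/b| < -((n:ℝ) * Real.log |(a:ℝ)*b|) := by
      have hq : (n:ℝ) + |L|/Real.log 2 < μ := hμM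
      have h5 : (|L|/Real.log 2) * Real.log 2 = |L| := div_mul_cancel₀ _ hlog2.ne'
      nlinarith [le_abs_self L, abs_nonneg L,
        mul_le_mul_of_nonneg_left hG2 (div_nonneg (abs_nonneg L) hlog2.le),
        mul_lt_mul_of_pos_right hq hG]
    have hpq : (((if 0 < a*b then a^2 else -(a^2)) : ℤ):ℝ) / ((|a*b| :ℤ):ℝ) = (a:ℝ)/b := by
      rcases lt_or_gt_of_ne hab0 with hneg | hpos
      · rw [if_neg (by omega), abs_of_neg hneg]
        push_cast
        field_simp
      · rw [if_pos hpos, abs_of_pos hpos]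
        push_cast
        field_simp
    refine ⟨if 0 < a*b then a^2 else -(a^2), |a*b|, by omega, ?_, ?_⟩
    · rw [hpq]; exact hxne a b
    · rw [hpq]
      have hQ : ((|a*b|:ℤ):ℝ) = |(a:ℝ)*b| := by
        rw [Int.cast_abs, Int.cast_mul]
      rw [hQ]
      calc |x - (a:ℝ)/b| = Real.exp (Real.log |x - (a:ℝ)/b|) := (Real.exp_log hD0).symm
        _ < Real.exp (-((n:ℝ) * Real.log |(a:ℝ)*b|)) := Real.exp_lt_exp.mpr hkey
        _ = 1 / |(a:ℝ)*b|^n := by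
            rw [Real.exp_neg, ← Real.log_pow, Real.exp_log (by positivity), one_div]
  · intro hLio
    rw [not_bddAbove_iff]
    intro M0
    set M := max M0 0 with hMdef
    clear_value M
    have hM0 : 0 ≤ M := hMdef ▸ le_max_right _ _
    have hC0 : (0:ℝ) ≤ Real.log (|x|+1) := Real.log_nonneg (by linarith)
    set C := Real.log (|x|+1)/Real.log 2 + 2 with hCdef
    clear_value C
    have hC : 0 < C := by
      have := div_nonneg hC0 hlog2.le
      rw [hCdef]; linarith
    obtain ⟨n, hn⟩ := exists_nat_gt (max (C*M + |L|/Real.log 2) (-L/Real.log 2))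
    have hn1 : C*M + |L|/Real.log 2 < n := lt_of_le_of_lt (le_max_left _ _) hn
    have hn2 : -L/Real.log 2 < n := lt_of_le_of_lt (le_max_right _ _) hn
    have hn2' : 0 < (n:ℝ) * Real.log 2 + L := by
      rw [div_lt_iff₀ hlog2] at hn2; linarith
    obtain ⟨a, b, hb1, hxab, hlt⟩ := hLio n
    have hb0 : b ≠ 0 := by omega
    have hbR2 : (2:ℝ) ≤ (b:ℝ) := by exact_mod_cast (by omega : (2:ℤ) ≤ b)
    have hbpos : (0:ℝ) < b := by linarith
    have hpow2 : (2:ℝ)^n ≤ (b:ℝ)^n := pow_le_pow_left₀ (by norm_num) hbR2 n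
    have hpow0 : (0:ℝ) < (2:ℝ)^n := by positivity
    have ha0 : a ≠ 0 := by
      rintro rfl
      rw [Int.cast_zero, zero_div, sub_zero] at hlt
      have h1 : |x| < 1/(2:ℝ)^n :=
        lt_of_lt_of_le hlt (by
          rw [one_div, one_div]
          exact inv_anti₀ hpow0 hpow2)
      have h2 : Real.log |x| < Real.log (1/(2:ℝ)^n) := Real.log_lt_log habs h1
      rw [one_div, Real.log_inv, Real.log_pow] at h2
      rw [hLdef] at hn2'
      linarith
    have haR : (a:ℝ) ≠ 0 := Int.cast_ne_zero.mpr ha0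
    have hab1 : |a*b| ≠ 1 := by
      have h1 : 1 ≤ |a| := Int.one_le_abs ha0
      have h2 : (2:ℤ) ≤ |b| := by rw [abs_of_pos (by omega : (0:ℤ) < b)]; omega
      have : (2:ℤ) ≤ |a*b| := by rw [abs_mul]; nlinarith
      omega
    refine ⟨_, ⟨a, b, ha0, hb0, hab1, rfl⟩, ?_⟩
    have hD0 : 0 < |x - (a:ℝ)/b| := abs_pos.mpr (sub_ne_zero.mpr hxab)
    have hlogb2 : Real.log 2 ≤ Real.log b := Real.log_le_log (by norm_num) hbR2
    have hlogb0 : 0 < Real.log b := lt_of_lt_of_le hlog2 hlogb2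
    have hlogD : Real.log |x - (a:ℝ)/b| < -((n:ℝ) * Real.log b) := by
      have := Real.log_lt_log hD0 hlt
      rwa [one_div, Real.log_inv, Real.log_pow] at this
    have hbn1 : (1:ℝ) ≤ (b:ℝ)^n := one_le_pow₀ (by linarith : (1:ℝ) ≤ (b:ℝ))
    have hDle1 : |x - (a:ℝ)/b| < 1 := by
      refine lt_of_lt_of_le hlt ?_
      rw [one_div]
      exact inv_le_one_of_one_le₀ hbn1
    have haB : |(a:ℝ)| ≤ (|x|+1) * b := by
      have h1 : |(a:ℝ)/b| - |x| ≤ |(a:ℝ)/b - x| := abs_sub_abs_le_abs_sub _ _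
      have h2 : |(a:ℝ)/b - x| = |x - (a:ℝ)/b| := abs_sub_comm _ _
      have h3 : |(a:ℝ)/b| ≤ |x| + 1 := by rw [h2] at h1; linarith
      have h4 : |(a:ℝ)/b| = |(a:ℝ)|/b := by rw [abs_div, abs_of_pos hbpos]
      rw [h4] at h3
      calc |(a:ℝ)| = |(a:ℝ)|/b * b := by field_simp
        _ ≤ (|x| + 1) * b := mul_le_mul_of_nonneg_right h3 hbpos.le
    have hGsplit : Real.log |(a:ℝ)*b| = Real.log |(a:ℝ)| + Real.log b := by
      rw [abs_mul, abs_of_pos hbpos, Real.log_mul (abs_ne_zero.mpr haR) hbpos.ne']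
    have hGle : Real.log |(a:ℝ)*b| ≤ C * Real.log b := by
      have h1 : Real.log |(a:ℝ)| ≤ Real.log ((|x|+1)*b) :=
        Real.log_le_log (abs_pos.mpr haR) haB
      rw [Real.log_mul (by positivity) hbpos.ne'] at h1
      have h2 : Real.log (|x|+1) ≤ Real.log (|x|+1)/Real.log 2 * Real.log b := by
        have h := mul_le_mul_of_nonneg_left hlogb2 (div_nonneg hC0 hlog2.le)
        rwa [div_mul_cancel₀ _ hlog2.ne'] at h
      rw [hGsplit, hCdef]
      nlinarith
    have hGpos : 0 < Real.log |(a:ℝ)*b| := by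
      have h1 : (0:ℝ) ≤ Real.log |(a:ℝ)| := by
        refine Real.log_nonneg ?_
        have : (1:ℤ) ≤ |a| := Int.one_le_abs ha0
        calc (1:ℝ) = ((1:ℤ):ℝ) := by norm_num
          _ ≤ ((|a|:ℤ):ℝ) := by exact_mod_cast this
          _ = |(a:ℝ)| := by rw [Int.cast_abs]
      rw [hGsplit]; linarith
    refine lt_of_le_of_lt (hMdef ▸ le_max_left M0 0 : M0 ≤ M) ?_
    rw [lt_div_iff₀ hGpos]
    have h3 : M * Real.log |(a:ℝ)*b| ≤ M*(C*Real.log b) :=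
      mul_le_mul_of_nonneg_left hGle hM0
    have h4 : (C*M) * Real.log b < ((n:ℝ) - |L|/Real.log 2) * Real.log b := by
      apply mul_lt_mul_of_pos_right _ hlogb0
      linarith
    have h5 : |L| ≤ (|L|/Real.log 2) * Real.log b := by
      have h := mul_le_mul_of_nonneg_left hlogb2 (div_nonneg (abs_nonneg L) hlog2.le)
      rwa [div_mul_cancel₀ _ hlog2.ne'] at h
    have hexp : M*(C*Real.log b) = (C*M)*Real.log b := by ring
    have hexp2 : ((n:ℝ) - |L|/Real.log 2) * Real.log b
        = (n:ℝ)*Real.log b - (|L|/Real.log 2)*Real.log b := by ring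
    have hMG : (M0 ⊔ 0) * Real.log |(a:ℝ)*b| = M * Real.log |(a:ℝ)*b| := by rw [hMdef]
    linarith [neg_abs_le L, hlogD, h3, h4, h5, hMG]
end

section
/- For every positive integer n, the finite continued fraction [1, 2, 2, ..., 2, 1] (with n twos followed by a final 1) equals 2 divided by the finite continued fraction [1, 2, 2, ..., 2] (with n twos). -/
lemma cfVal_cons (a : ℝ) (l : List ℝ) (h : l ≠ []) :
    cfVal (a :: l) = a + (cfVal l)⁻¹ := by
  simp [cfVal, h]

lemma key (n : ℕ) (hn : 1 ≤ n) :
    1 < cfVal (List.replicate n (2 : ℝ)) ∧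
    cfVal (List.replicate n (2 : ℝ) ++ [(1 : ℝ)]) =
      (cfVal (List.replicate n (2 : ℝ)) + 1) / (cfVal (List.replicate n (2 : ℝ)) - 1) := by
  induction n with
  | zero => omega
  | succ m ih =>
    rcases Nat.eq_zero_or_pos m with hm | hm
    · subst hm
      norm_num [cfVal]
    · obtain ⟨hB, hA⟩ := ih hm
      set B := cfVal (List.replicate m (2 : ℝ)) with hBdef
      have hrep : List.replicate (m + 1) (2 : ℝ) = 2 :: List.replicate m (2 : ℝ) := rfl
      have hne : List.replicate m (2 : ℝ) ≠ [] := by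
        simp [List.replicate_eq_nil_iff]; omega
      have hne' : List.replicate m (2 : ℝ) ++ [(1 : ℝ)] ≠ [] := by simp
      have hBnew : cfVal (List.replicate (m + 1) (2 : ℝ)) = 2 + B⁻¹ := by
        rw [hrep, cfVal_cons _ _ hne]
      have hAnew : cfVal (List.replicate (m + 1) (2 : ℝ) ++ [(1 : ℝ)]) =
          2 + (cfVal (List.replicate m (2 : ℝ) ++ [(1 : ℝ)]))⁻¹ := by
        rw [hrep, List.cons_append, cfVal_cons _ _ hne']
      have hB0 : (0 : ℝ) < B := lt_trans one_pos hB
      have hBi : (0 : ℝ) < B⁻¹ := by positivity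
      constructor
      · rw [hBnew]; linarith
      · rw [hAnew, hBnew, hA]
        have h1 : B - 1 ≠ 0 := by linarith
        have h2 : B ≠ 0 := by linarith
        have h3 : B + 1 ≠ 0 := by linarith
        have h4 : (1:ℝ) + B ≠ 0 := by linarith
        rw [inv_div]
        have h5 : 2 + B⁻¹ - 1 ≠ 0 := by
          have : (0:ℝ) < 2 + B⁻¹ - 1 := by linarith
          exact ne_of_gt this
        rw [eq_div_iff h5]
        field_simp
        ring

theorem stmt_17 (n : ℕ) (hn : 1 ≤ n) :
    cfVal ((1 : ℝ) :: (List.replicate n (2 : ℝ) ++ [(1 : ℝ)])) =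
      2 / cfVal ((1 : ℝ) :: List.replicate n (2 : ℝ)) := by
  obtain ⟨hB, hA⟩ := key n hn
  have hne : List.replicate n (2 : ℝ) ≠ [] := by
    simp [List.replicate_eq_nil_iff]; omega
  have hne' : List.replicate n (2 : ℝ) ++ [(1 : ℝ)] ≠ [] := by simp
  rw [cfVal_cons _ _ hne', cfVal_cons _ _ hne, hA]
  set B := cfVal (List.replicate n (2 : ℝ))
  have h1 : B - 1 ≠ 0 := by linarith
  have h2 : B ≠ 0 := by linarith
  have h3 : B + 1 ≠ 0 := by linarith
  field_simp
  ring
end
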